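/- Let M₀ be an admissible lattice in N₀ such that M₀ ∩ τ(M₀) is τ-stable but M₀ + τ(M₀) is not τ-stable. Let T₀ be a lattice with M₀ ⊂¹ T₀ ⊂¹ M₀^∨ such that τ(M₀) ⊆ T₀. Then T₀ = M₀ + τ(M₀), and the lattice S₀ := pM₀^∨ + pτ(T₀^∨) satisfies pM₀^∨ ⊂¹ S₀ ⊂¹ M₀ and the pair (S₀, T₀) is a web pair for M₀. -/

import Mathlib

/-!
Write `I = M₀ ∩ τM₀`, `T = M₀ + τM₀`, and regard `τ` as an automorphism of the modular lattice
of submodules which fixes `I` but not `T`. Then `M₀ ⋖ T₀ ⊇ τM₀` forces `T₀ = T`, and modularity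
gives `I ⋖ M₀` and `M₀ ∩ τT = I`.

Dually, `I^∨ = M₀^∨ + τ(M₀^∨)`, so by admissibility `pI^∨ ⊆ M₀`; as `pI^∨` is τ-stable it also
lies in `τM₀`, hence in `I`. The chain `pM₀^∨ ⋖ pI^∨ ⊆ I ⋖ M₀ ⋖ T ⋖ M₀^∨` lives in
`M₀^∨ / pM₀^∨`, which has length `4`, so `pI^∨ = I`. Finally `pS₀^∨ = M₀ ∩ τT = I = pI^∨`, so
`S₀ = I`, and the web-pair inclusions follow from the τ-stability of `I` and `I^∨`.
-/

noncomputable section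

namespace QURZ

variable {W₀ : Type*} [CommRing W₀]

/-- The length of `B / A`: the Krull dimension of the interval `[A, B]`
in the lattice of submodules. -/
noncomputable def relLength {M : Type*} [AddCommGroup M] [Module W₀ M]
    (A B : Submodule W₀ M) : WithBot ℕ∞ :=
  Order.krullDim (Set.Icc A B)

/-- `SubIdx A B d` means `A ⊆ B` and the quotient `B/A` has length `d`
(written `A ⊂^d B` in the paper). -/
def SubIdx {M : Type*} [AddCommGroup M] [Module W₀ M]
    (A B : Submodule W₀ M) (d : ℕ) : Prop :=
  A ≤ B ∧ relLength A B = ((d : ℕ∞) : WithBot ℕ∞)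

/-- The image `c • A` of a submodule `A` under scalar multiplication by `c`. -/
def smulLat {M : Type*} [AddCommGroup M] [Module W₀ M] (c : W₀) (A : Submodule W₀ M) :
    Submodule W₀ M where
  carrier := {x | ∃ m ∈ A, c • m = x}
  zero_mem' := ⟨0, A.zero_mem, smul_zero c⟩
  add_mem' := by
    rintro a b ⟨m, hm, rfl⟩ ⟨n, hn, rfl⟩
    exact ⟨m + n, A.add_mem hm hn, smul_add c m n⟩
  smul_mem' := by
    rintro d x ⟨m, hm, rfl⟩
    exact ⟨d • m, A.smul_mem d hm, by rw [smul_smul, smul_smul, mul_comm]⟩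

/-- The image of a submodule under a `σ₀`-semilinear map, where `σ₀` is a ring
automorphism. -/
def mapLat {M M' : Type*} [AddCommGroup M] [Module W₀ M] [AddCommGroup M'] [Module W₀ M']
    {σ₀ : W₀ ≃+* W₀} (g : M →ₛₗ[(σ₀ : W₀ →+* W₀)] M') (A : Submodule W₀ M) :
    Submodule W₀ M' where
  carrier := g '' A
  zero_mem' := ⟨0, A.zero_mem, map_zero g⟩
  add_mem' := by
    rintro a b ⟨m, hm, rfl⟩ ⟨n, hn, rfl⟩
    exact ⟨m + n, A.add_mem hm hn, map_add g m n⟩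
  smul_mem' := by
    rintro c x ⟨m, hm, rfl⟩
    refine ⟨σ₀.symm c • m, A.smul_mem _ hm, ?_⟩
    rw [map_smulₛₗ]
    simp

variable {K₀ : Type*} [Field K₀] [Algebra W₀ K₀]
variable {N₀ : Type*} [AddCommGroup N₀] [Module K₀ N₀] [Module W₀ N₀] [IsScalarTower W₀ K₀ N₀]

/-- A lattice: a finitely generated `W₀`-submodule spanning the ambient space over `K₀`. -/
def IsLattice (A : Submodule W₀ N₀) : Prop :=
  A.FG ∧ Submodule.span K₀ (A : Set N₀) = ⊤

/-- The dual lattice with respect to a bilinear form, consisting of the vectors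
pairing into `W₀` with all elements of `A`. -/
def dualLat (form : N₀ →ₗ[K₀] N₀ →ₗ[K₀] K₀) (A : Submodule W₀ N₀) : Submodule W₀ N₀ where
  carrier := {x | ∀ y ∈ A, form x y ∈ (algebraMap W₀ K₀).range}
  zero_mem' := fun y _ => by rw [map_zero, LinearMap.zero_apply]; exact zero_mem _
  add_mem' := by
    intro a b ha hb y hy
    rw [map_add, LinearMap.add_apply]
    exact add_mem (ha y hy) (hb y hy)
  smul_mem' := by
    intro c x hx y hy
    rw [← IsScalarTower.algebraMap_smul K₀ c x, map_smul, LinearMap.smul_apply, smul_eq_mul]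
    exact mul_mem (RingHom.mem_range_self _ c) (hx y hy)

/-- An admissible lattice: `p M₀^∨ ⊆ M₀ ⊂² M₀^∨` and `p τ(M₀^∨) ⊆ M₀ ⊂² τ(M₀^∨)`.
These are the `𝔽`-points of the reduced quaternionic unitary Rapoport–Zink space `ℳ`
with paramodular level. -/
def IsAdmissible (p : ℕ) (form : N₀ →ₗ[K₀] N₀ →ₗ[K₀] K₀)
    {σ₀ : W₀ ≃+* W₀} (τ : N₀ →ₛₗ[(σ₀ : W₀ →+* W₀)] N₀) (M₀ : Submodule W₀ N₀) : Prop :=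
  IsLattice (K₀ := K₀) M₀ ∧
  smulLat (p : W₀) (dualLat form M₀) ≤ M₀ ∧
  SubIdx M₀ (dualLat form M₀) 2 ∧
  smulLat (p : W₀) (mapLat τ (dualLat form M₀)) ≤ M₀ ∧
  SubIdx M₀ (mapLat τ (dualLat form M₀)) 2

/-- A web pair `(S₀, T₀)` for an admissible lattice `M₀`:
`pM₀^∨ ⊂¹ S₀ ⊂¹ M₀ ⊂¹ T₀ ⊂¹ M₀^∨`, `pτ(T₀^∨) ⊆ S₀ ⊆ τ(T₀^∨)` and
`pτ(S₀^∨) ⊆ T₀ ⊆ τ(S₀^∨)`.  Web pairs for `M₀` are the points of the fiber over `M₀`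
of the projection from Iwahori level `ℳ_Iw(𝔽)` to `ℳ(𝔽)`. -/
def IsWebPair (p : ℕ) (form : N₀ →ₗ[K₀] N₀ →ₗ[K₀] K₀)
    {σ₀ : W₀ ≃+* W₀} (τ : N₀ →ₛₗ[(σ₀ : W₀ →+* W₀)] N₀)
    (M₀ S₀ T₀ : Submodule W₀ N₀) : Prop :=
  IsLattice (K₀ := K₀) S₀ ∧ IsLattice (K₀ := K₀) T₀ ∧
  SubIdx (smulLat (p : W₀) (dualLat form M₀)) S₀ 1 ∧
  SubIdx S₀ M₀ 1 ∧ SubIdx M₀ T₀ 1 ∧ SubIdx T₀ (dualLat form M₀) 1 ∧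
  smulLat (p : W₀) (mapLat τ (dualLat form T₀)) ≤ S₀ ∧
  S₀ ≤ mapLat τ (dualLat form T₀) ∧
  smulLat (p : W₀) (mapLat τ (dualLat form S₀)) ≤ T₀ ∧
  T₀ ≤ mapLat τ (dualLat form S₀)

section IntervalKrullDim

open Order Set

theorem _root_.Order.krullDim_Icc_eq_one_iff {α : Type*} [PartialOrder α] {a b : α}
    (h : a ≤ b) : krullDim (Icc a b) = 1 ↔ a ⋖ b := by
  have : Fact (a ≤ b) := ⟨h⟩
  rw [krullDim_eq_one_iff_of_boundedOrder, isSimpleOrder_iff_isAtom_top, ← bot_covBy_iff]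
  exact (Set.OrdConnected.apply_covBy_apply_iff (OrderEmbedding.subtype (· ∈ Icc a b))
    (by rw [OrderEmbedding.coe_subtype, Subtype.range_coe_subtype]; exact ordConnected_Icc)).symm

theorem _root_.Order.le_krullDim_Icc_of_strictMono {α : Type*} [Preorder α] {n : ℕ}
    {f : Fin (n + 1) → α} (hf : StrictMono f) :
    (n : WithBot ℕ∞) ≤ krullDim (Icc (f 0) (f (Fin.last n))) := by
  let s : LTSeries (Icc (f 0) (f (Fin.last n))) :=
    ⟨n, fun i => ⟨f i, hf.monotone (Fin.zero_le i), hf.monotone (Fin.le_last i)⟩,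
      fun i => show f i.castSucc < f i.succ from hf i.castSucc_lt_succ⟩
  exact_mod_cast s.length_le_krullDim

end IntervalKrullDim

section LatticeAutomorphism

variable {α : Type*} [Lattice α] (f : α ≃o α) {a : α}

theorem _root_.OrderIso.eq_sup_apply_of_covBy (hinf : f (a ⊓ f a) = a ⊓ f a)
    (hsup : f (a ⊔ f a) ≠ a ⊔ f a) {t : α} (hat : a ⋖ t) (hft : f a ≤ t) :
    t = a ⊔ f a := by
  refine ((hat.eq_or_eq le_sup_left (sup_le hat.le hft)).resolve_left fun h => ?_).symm
  have hfa : f a ≤ a := sup_eq_left.mp h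
  have : f a = a := f.injective (by rwa [inf_eq_right.mpr hfa] at hinf)
  exact hsup (by rw [this, sup_idem, this])

variable [IsModularLattice α]

theorem _root_.OrderIso.inf_apply_covBy (hinf : f (a ⊓ f a) = a ⊓ f a)
    (h : a ⋖ a ⊔ f a) : a ⊓ f a ⋖ a := by
  rw [← apply_covBy_apply_iff f, hinf]
  exact inf_covBy_of_covBy_sup_left h

theorem _root_.OrderIso.inf_apply_sup_eq (hinf : f (a ⊓ f a) = a ⊓ f a)
    (hsup : f (a ⊔ f a) ≠ a ⊔ f a) (h : a ⋖ a ⊔ f a) :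
    a ⊓ f (a ⊔ f a) = a ⊓ f a := by
  have hb : f a ⋖ a ⊔ f a := covBy_sup_of_inf_covBy_left (f.inf_apply_covBy hinf h)
  have hfb : f a ⋖ f (a ⊔ f a) := (apply_covBy_apply_iff f).mpr h
  have hmeet : (a ⊔ f a) ⊓ f (a ⊔ f a) = f a := by
    refine ((hb.eq_or_eq (le_inf le_sup_right hfb.le) inf_le_left).resolve_right fun h' => ?_)
    have hle : a ⊔ f a ≤ f (a ⊔ f a) := inf_eq_left.mp h'
    exact hsup ((hfb.eq_or_eq hb.le hle).resolve_left hb.lt.ne').symm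
  calc a ⊓ f (a ⊔ f a) = a ⊓ ((a ⊔ f a) ⊓ f (a ⊔ f a)) := by
        rw [← inf_assoc, inf_eq_left.mpr (le_sup_left : a ≤ a ⊔ f a)]
    _ = a ⊓ f a := by rw [hmeet]

end LatticeAutomorphism

section SubmoduleLattice

open Order Set Submodule

variable {M : Type*} [AddCommGroup M] [Module W₀ M]

theorem subIdx_one_iff {A B : Submodule W₀ M} : SubIdx A B 1 ↔ A ⋖ B := by
  refine ⟨fun h => (krullDim_Icc_eq_one_iff h.1).mp ?_, fun h => ⟨h.le, ?_⟩⟩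
  · simpa [relLength] using h.2
  · simpa [relLength] using (krullDim_Icc_eq_one_iff h.le).mpr h

theorem relLength_le_length {P : Type*} [AddCommGroup P] [Module W₀ P] {A B : Submodule W₀ M}
    (f : B →ₗ[W₀] P) (hf : LinearMap.ker f ≤ A.comap B.subtype) :
    relLength A B ≤ Module.length W₀ P := by
  rw [relLength, Module.coe_length]
  refine krullDim_le_of_strictMono (fun Y : Icc A B => (Y.1.comap B.subtype).map f)
    (Monotone.strictMono_of_injective (fun Y Z h => map_mono (comap_mono h)) ?_)
  intro Y Z h
  have hY : Y.1 = B ⊓ Y.1 := (inf_eq_right.mpr Y.2.2).symm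
  have hZ : Z.1 = B ⊓ Z.1 := (inf_eq_right.mpr Z.2.2).symm
  have hcomap := congrArg (comap f) h
  simp only [comap_map_eq, sup_eq_left.mpr (hf.trans (comap_mono Y.2.1)),
    sup_eq_left.mpr (hf.trans (comap_mono Z.2.1))] at hcomap
  refine Subtype.ext ?_
  rw [hY, hZ, ← map_comap_subtype, ← map_comap_subtype, hcomap]

theorem smulLat_sup (c : W₀) (A B : Submodule W₀ M) :
    smulLat c (A ⊔ B) = smulLat c A ⊔ smulLat c B :=
  map_sup A B (DistribSMul.toLinearMap W₀ M c)

theorem smulLat_mono (c : W₀) : Monotone (smulLat (M := M) c) :=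
  fun _ _ h => map_mono (f := DistribSMul.toLinearMap W₀ M c) h

variable {σ₀ : W₀ ≃+* W₀}

theorem mapLat_mono (τ : M →ₛₗ[(σ₀ : W₀ →+* W₀)] M) : Monotone (mapLat τ) :=
  fun _ _ h => map_mono (f := τ) h

theorem mapLat_smulLat (τ : M →ₛₗ[(σ₀ : W₀ →+* W₀)] M) {c : W₀} (hc : σ₀ c = c)
    (A : Submodule W₀ M) : mapLat τ (smulLat c A) = smulLat c (mapLat τ A) := by
  ext x
  constructor
  · rintro ⟨_, ⟨m, hm, rfl⟩, rfl⟩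
    exact ⟨τ m, ⟨m, hm, rfl⟩, by rw [map_smulₛₗ, RingEquiv.coe_toRingHom, hc]⟩
  · rintro ⟨_, ⟨m, hm, rfl⟩, rfl⟩
    exact ⟨c • m, ⟨m, hm, rfl⟩, by rw [map_smulₛₗ, RingEquiv.coe_toRingHom, hc]⟩

/- The two order isomorphisms below are `mapLat τ` and `smulLat q` by definition, so hypotheses
phrased with `mapLat` and `smulLat` apply to them unchanged. -/
def mapLatOrderIso (τ : M →ₛₗ[(σ₀ : W₀ →+* W₀)] M) (hτ : Function.Bijective τ) :
    Submodule W₀ M ≃o Submodule W₀ M :=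
  orderIsoMapComapOfBijective τ hτ

variable [Module K₀ M] [IsScalarTower W₀ K₀ M]

variable (K₀) in
def smulLatOrderIso {q : W₀} (hq : algebraMap W₀ K₀ q ≠ 0) :
    Submodule W₀ M ≃o Submodule W₀ M :=
  orderIsoMapComapOfBijective (DistribSMul.toLinearMap W₀ M q) <| by
    have : ⇑(DistribSMul.toLinearMap W₀ M q) = fun x => (Units.mk0 _ hq : K₀ˣ) • x :=
      funext fun x => (algebraMap_smul K₀ q x).symm
    rw [this]
    exact MulAction.bijective _

theorem smulLat_inf {q : W₀} (hq : algebraMap W₀ K₀ q ≠ 0) (A B : Submodule W₀ M) :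
    smulLat q (A ⊓ B) = smulLat q A ⊓ smulLat q B :=
  (smulLatOrderIso K₀ hq).map_inf A B

end SubmoduleLattice

section Lattices

open Submodule Pointwise

set_option linter.unusedSectionVars false in
theorem isLattice_mapLat {σ₀ : W₀ ≃+* W₀} {τ : N₀ →ₛₗ[(σ₀ : W₀ →+* W₀)] N₀}
    (hτ : Function.Bijective τ) {σ : K₀ ≃+* K₀} (hτσ : ∀ (a : K₀) (x : N₀), τ (a • x) = σ a • τ x)
    {A : Submodule W₀ N₀} (hA : IsLattice (K₀ := K₀) A) : IsLattice (K₀ := K₀) (mapLat τ A) := by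
  let τK : N₀ →ₛₗ[(σ : K₀ →+* K₀)] N₀ := { τ.toAddHom with map_smul' := hτσ }
  refine ⟨hA.1.map τ, ?_⟩
  have hsurj : Function.Surjective τK := hτ.2
  have := congrArg (Submodule.map τK) hA.2
  rwa [map_span, Submodule.map_top, LinearMap.range_eq_top.mpr hsurj] at this

theorem isLattice_iff {A : Submodule W₀ N₀} : IsLattice (K₀ := K₀) A ↔ A.IsLattice K₀ :=
  ⟨fun h => ⟨h.1, h.2⟩, fun h => ⟨h.fg, h.span_eq_top⟩⟩

theorem isLattice_smulLat {q : W₀} (hq : algebraMap W₀ K₀ q ≠ 0) {A : Submodule W₀ N₀}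
    (hA : IsLattice (K₀ := K₀) A) : IsLattice (K₀ := K₀) (smulLat q A) := by
  have : smulLat q A = (Units.mk0 _ hq : K₀ˣ) • A := by
    refine SetLike.coe_injective ?_
    ext x
    simp [smulLat, Submodule.coe_pointwise_smul, Set.mem_smul_set, Units.smul_def,
      algebraMap_smul]
  rw [this, isLattice_iff]
  have := isLattice_iff.mp hA
  infer_instance

theorem isLattice_sup {A B : Submodule W₀ N₀} (hA : IsLattice (K₀ := K₀) A)
    (hB : IsLattice (K₀ := K₀) B) : IsLattice (K₀ := K₀) (A ⊔ B) := by
  have := isLattice_iff.mp hA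
  have := isLattice_iff.mp hB
  exact isLattice_iff.mpr inferInstance

theorem isLattice_of_le_of_le [IsNoetherianRing W₀] {A B C : Submodule W₀ N₀}
    (hA : IsLattice (K₀ := K₀) A) (hC : IsLattice (K₀ := K₀) C) (hAB : A ≤ B) (hBC : B ≤ C) :
    IsLattice (K₀ := K₀) B := by
  have := isLattice_iff.mp hA
  exact isLattice_iff.mpr (IsLattice.of_le_of_isLattice_of_fg K₀ hAB (hC.1.of_le hBC))

variable [IsDomain W₀] [IsPrincipalIdealRing W₀] [IsFractionRing W₀ K₀]

theorem IsLattice.exists_basis {X : Submodule W₀ N₀} (hX : IsLattice (K₀ := K₀) X) :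
    ∃ (n : ℕ) (b : Module.Basis (Fin n) K₀ N₀), X = span W₀ (Set.range b) := by
  have := isLattice_iff.mp hX
  let b := Module.Free.chooseBasis W₀ X
  refine ⟨_, (b.extendOfIsLattice K₀).reindex (Fintype.equivFin _), ?_⟩
  have hb : ⇑(b.extendOfIsLattice K₀) = X.subtype ∘ b := funext (b.extendOfIsLattice_apply K₀)
  rw [Module.Basis.range_reindex, hb, Set.range_comp, ← map_span, b.span_eq, Submodule.map_top,
    range_subtype]

theorem isLattice_inf [FiniteDimensional K₀ N₀] {A B : Submodule W₀ N₀}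
    (hA : IsLattice (K₀ := K₀) A) (hB : IsLattice (K₀ := K₀) B) :
    IsLattice (K₀ := K₀) (A ⊓ B) := by
  have := isLattice_iff.mp hA
  have := isLattice_iff.mp hB
  exact isLattice_iff.mpr inferInstance

end Lattices

section LengthBound

open Module Submodule

variable [IsDomain W₀] [IsPrincipalIdealRing W₀] [IsFractionRing W₀ K₀]

theorem relLength_smulLat_le_finrank {q : W₀} (hq : Irreducible q) {X : Submodule W₀ N₀}
    (hX : IsLattice (K₀ := K₀) X) : relLength (smulLat q X) X ≤ finrank K₀ N₀ := by
  have := isLattice_iff.mp hX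
  let I := Ideal.span {q}
  have : I.IsMaximal := PrincipalIdealRing.isMaximal_of_irreducible hq
  let := Ideal.Quotient.field I
  let b := Free.chooseBasis W₀ X
  -- reduction modulo `q` of the coordinates in a basis of `X`; its kernel is `qX`
  let f : X →ₗ[W₀] (Free.ChooseBasisIndex W₀ X → W₀ ⧸ I) := (I.mkQ.compLeft _) ∘ₗ b.equivFun
  have hker : LinearMap.ker f ≤ (smulLat q X).comap X.subtype := by
    intro x hx
    have hc : ∀ i, ∃ c, c * q = b.repr x i := fun i =>
      Ideal.mem_span_singleton'.mp ((Submodule.Quotient.mk_eq_zero I).mp (congrFun hx i))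
    choose c hc using hc
    have hx : q • b.equivFun.symm c = x :=
      b.equivFun.injective (funext fun i => by
        rw [map_smul, LinearEquiv.apply_symm_apply, Pi.smul_apply, smul_eq_mul, b.equivFun_apply,
          ← hc, mul_comm])
    exact ⟨_, Submodule.coe_mem _, congrArg Subtype.val hx⟩
  calc relLength (smulLat q X) X ≤ length W₀ (Free.ChooseBasisIndex W₀ X → W₀ ⧸ I) :=
        relLength_le_length f hker
    _ = finrank W₀ X := by
        rw [length_eq_of_surjective (R := W₀ ⧸ I) Ideal.Quotient.mk_surjective, length_eq_finrank,
          finrank_fintype_fun_eq_card, finrank_eq_card_chooseBasisIndex]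
        norm_cast
    _ = finrank K₀ N₀ := by
        rw [finrank, finrank, IsLattice.rank' K₀ X]

end LengthBound

section Duals

open Submodule LinearMap.BilinForm

variable (form : N₀ →ₗ[K₀] N₀ →ₗ[K₀] K₀)

theorem dualLat_eq_dualSubmodule (A : Submodule W₀ N₀) :
    dualLat form A = dualSubmodule form A := by
  ext x
  simp only [mem_dualSubmodule, Submodule.mem_one]
  rfl

theorem dualLat_antitone : Antitone (dualLat (W₀ := W₀) form) :=
  fun _ _ h _ hx y hy => hx y (h hy)

theorem dualLat_sup (A B : Submodule W₀ N₀) :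
    dualLat form (A ⊔ B) = dualLat form A ⊓ dualLat form B := by
  refine le_antisymm (le_inf (dualLat_antitone form le_sup_left)
    (dualLat_antitone form le_sup_right)) ?_
  rintro x ⟨hA, hB⟩ y hy
  obtain ⟨a, ha, b, hb, rfl⟩ := mem_sup.mp hy
  rw [map_add]
  exact add_mem (hA a ha) (hB b hb)

theorem _root_.LinearMap.BilinForm.dualSubmodule_flip_of_isAlt {form : N₀ →ₗ[K₀] N₀ →ₗ[K₀] K₀}
    (hform : form.IsAlt) (A : Submodule W₀ N₀) :
    dualSubmodule (LinearMap.BilinForm.flip form) A = dualSubmodule form A := by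
  ext x
  refine forall₂_congr fun y _ => ?_
  rw [flip_apply, ← hform.neg, neg_mem_iff]

theorem smulLat_dualLat_smulLat {q : W₀} (hq : algebraMap W₀ K₀ q ≠ 0) (A : Submodule W₀ N₀) :
    smulLat q (dualLat form (smulLat q A)) = dualLat form A := by
  have hright (y x : N₀) : form y (q • x) = algebraMap W₀ K₀ q * form y x := by
    rw [← algebraMap_smul K₀ q x, map_smul, smul_eq_mul]
  have hleft (y x : N₀) : form (q • y) x = algebraMap W₀ K₀ q * form y x := by
    rw [← algebraMap_smul K₀ q y, map_smul, LinearMap.smul_apply, smul_eq_mul]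
  ext z
  constructor
  · rintro ⟨y, hy, rfl⟩ x hx
    rw [hleft, ← hright]
    exact hy (q • x) ⟨x, hx, rfl⟩
  · intro hz
    refine ⟨(algebraMap W₀ K₀ q)⁻¹ • z, ?_, ?_⟩
    · rintro _ ⟨x, hx, rfl⟩
      rw [hright, map_smul, LinearMap.smul_apply, smul_eq_mul, ← mul_assoc,
        mul_inv_cancel₀ hq, one_mul]
      exact hz x hx
    · rw [← algebraMap_smul K₀, smul_smul, mul_inv_cancel₀ hq, one_smul]

theorem dualLat_mapLat {σ : K₀ ≃+* K₀} {σ₀ : W₀ ≃+* W₀}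
    (hσ : ∀ c : W₀, algebraMap W₀ K₀ (σ₀ c) = σ (algebraMap W₀ K₀ c))
    {τ : N₀ →ₛₗ[(σ₀ : W₀ →+* W₀)] N₀} (hτ : Function.Bijective τ)
    (hτ_form : ∀ x y, form (τ x) (τ y) = σ (form x y)) (A : Submodule W₀ N₀) :
    dualLat form (mapLat τ A) = mapLat τ (dualLat form A) := by
  have hrange (z : K₀) : σ z ∈ (algebraMap W₀ K₀).range ↔ z ∈ (algebraMap W₀ K₀).range := by
    refine ⟨fun ⟨r, hr⟩ => ⟨σ₀.symm r, σ.injective ?_⟩, fun ⟨r, hr⟩ => ⟨σ₀ r, by rw [hσ, hr]⟩⟩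
    rw [← hσ, RingEquiv.apply_symm_apply, hr]
  ext z
  obtain ⟨y, rfl⟩ := hτ.2 z
  constructor
  · intro hy
    refine ⟨y, fun x hx => ?_, rfl⟩
    rw [← hrange, ← hτ_form]
    exact hy (τ x) ⟨x, hx, rfl⟩
  · rintro ⟨y', hy', hyy'⟩ _ ⟨x, hx, rfl⟩
    rw [← hτ.1 hyy', hτ_form, hrange]
    exact hy' x hx

variable {form}
variable [IsDomain W₀] [IsPrincipalIdealRing W₀] [IsFractionRing W₀ K₀]

theorem dualLat_dualLat (hform : form.IsAlt) (hsep : form.SeparatingLeft)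
    {X : Submodule W₀ N₀} (hX : IsLattice (K₀ := K₀) X) : dualLat form (dualLat form X) = X := by
  obtain ⟨n, b, rfl⟩ := hX.exists_basis
  have : Module.Finite K₀ N₀ := .of_basis b
  rw [dualLat_eq_dualSubmodule, dualLat_eq_dualSubmodule,
    ← dualSubmodule_flip_of_isAlt hform]
  exact dualSubmodule_flip_dualSubmodule_of_basis (R := W₀) form (.ofSeparatingLeft hsep) b

theorem isLattice_dualLat (hsep : form.SeparatingLeft) {X : Submodule W₀ N₀}
    (hX : IsLattice (K₀ := K₀) X) : IsLattice (K₀ := K₀) (dualLat form X) := by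
  classical
  obtain ⟨n, b, rfl⟩ := hX.exists_basis
  have : Module.Finite K₀ N₀ := .of_basis b
  rw [dualLat_eq_dualSubmodule,
    dualSubmodule_span_of_basis (R := W₀) form (.ofSeparatingLeft hsep) b]
  exact ⟨fg_span (Set.finite_range _), by rw [span_span_of_tower, Module.Basis.span_eq]⟩

theorem dualLat_inf (hform : form.IsAlt) (hsep : form.SeparatingLeft) {X Y : Submodule W₀ N₀}
    (hX : IsLattice (K₀ := K₀) X) (hY : IsLattice (K₀ := K₀) Y) :
    dualLat form (X ⊓ Y) = dualLat form X ⊔ dualLat form Y := by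
  rw [← dualLat_dualLat hform hsep
      (isLattice_sup (isLattice_dualLat hsep hX) (isLattice_dualLat hsep hY)),
    dualLat_sup, dualLat_dualLat hform hsep hX, dualLat_dualLat hform hsep hY]

theorem covBy_dualLat (hform : form.IsAlt) (hsep : form.SeparatingLeft)
    {X Y : Submodule W₀ N₀} (hX : IsLattice (K₀ := K₀) X) (hY : IsLattice (K₀ := K₀) Y)
    (h : X ⋖ Y) : dualLat form Y ⋖ dualLat form X := by
  have hdd {Z : Submodule W₀ N₀} (hZ : IsLattice (K₀ := K₀) Z) := dualLat_dualLat hform hsep hZ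
  refine ⟨lt_of_le_of_ne (dualLat_antitone form h.le) fun heq => h.ne ?_, fun Z hYZ hZX => ?_⟩
  · rw [← hdd hX, ← hdd hY, heq]
  have hZ : IsLattice (K₀ := K₀) Z := isLattice_of_le_of_le (isLattice_dualLat hsep hY)
    (isLattice_dualLat hsep hX) hYZ.le hZX.le
  have hXZ : X ≤ dualLat form Z := hdd hX ▸ dualLat_antitone form hZX.le
  have hZY : dualLat form Z ≤ Y := hdd hY ▸ dualLat_antitone form hYZ.le
  rcases h.eq_or_eq hXZ hZY with h' | h'
  · exact hZX.ne (by rw [← h', hdd hZ])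
  · exact hYZ.ne' (by rw [← h', hdd hZ])

end Duals

section WebPair

open Module

variable [IsDomain W₀] [IsPrincipalIdealRing W₀] [IsFractionRing W₀ K₀]
variable {form : N₀ →ₗ[K₀] N₀ →ₗ[K₀] K₀} {σ : K₀ ≃+* K₀} {σ₀ : W₀ ≃+* W₀}
variable {τ : N₀ →ₛₗ[(σ₀ : W₀ →+* W₀)] N₀}

theorem eq_of_covBy_chain_of_finrank_eq_four (hdim : finrank K₀ N₀ = 4) {q : W₀}
    (hq : Irreducible q) {X : Submodule W₀ N₀} (hX : IsLattice (K₀ := K₀) X)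
    {a b c d : Submodule W₀ N₀} (ha : smulLat q X ⋖ a) (hab : a ≤ b) (hbc : b ⋖ c)
    (hcd : c ⋖ d) (hdX : d ⋖ X) : a = b := by
  by_contra hne
  have hchain : StrictMono ![smulLat q X, a, b, c, d, X] := by
    rw [Fin.strictMono_iff_lt_succ]
    intro i
    fin_cases i
    exacts [ha.lt, lt_of_le_of_ne hab hne, hbc.lt, hcd.lt, hdX.lt]
  have h := (Order.le_krullDim_Icc_of_strictMono hchain).trans
    (relLength_smulLat_le_finrank (K₀ := K₀) hq hX)
  rw [hdim] at h
  norm_num at h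

theorem smulLat_dualLat_inf_mapLat_le (hform : form.IsAlt) (hsep : form.SeparatingLeft)
    (hσ : ∀ c : W₀, algebraMap W₀ K₀ (σ₀ c) = σ (algebraMap W₀ K₀ c))
    (hτ : Function.Bijective τ) (hτσ : ∀ (a : K₀) (x : N₀), τ (a • x) = σ a • τ x)
    (hτ_form : ∀ x y, form (τ x) (τ y) = σ (form x y)) {c : W₀} (hc : σ₀ c = c)
    {M : Submodule W₀ N₀} (hM : IsLattice (K₀ := K₀) M)
    (hcM : smulLat c (dualLat form M) ≤ M) (hcτM : smulLat c (mapLat τ (dualLat form M)) ≤ M)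
    (hstable : mapLat τ (M ⊓ mapLat τ M) = M ⊓ mapLat τ M) :
    smulLat c (dualLat form (M ⊓ mapLat τ M)) ≤ M ⊓ mapLat τ M := by
  have hle : smulLat c (dualLat form (M ⊓ mapLat τ M)) ≤ M := by
    rw [dualLat_inf hform hsep hM (isLattice_mapLat hτ hτσ hM), dualLat_mapLat form hσ hτ hτ_form,
      smulLat_sup]
    exact sup_le hcM hcτM
  have hτstable : mapLat τ (smulLat c (dualLat form (M ⊓ mapLat τ M)))
      = smulLat c (dualLat form (M ⊓ mapLat τ M)) := by
    rw [mapLat_smulLat τ hc, ← dualLat_mapLat form hσ hτ hτ_form, hstable]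
  exact le_inf hle (hτstable ▸ mapLat_mono τ hle)

theorem smulLat_dualLat_sup_eq_inf [FiniteDimensional K₀ N₀] (hform : form.IsAlt)
    (hsep : form.SeparatingLeft)
    (hσ : ∀ c : W₀, algebraMap W₀ K₀ (σ₀ c) = σ (algebraMap W₀ K₀ c))
    (hτ : Function.Bijective τ) (hτσ : ∀ (a : K₀) (x : N₀), τ (a • x) = σ a • τ x)
    (hτ_form : ∀ x y, form (τ x) (τ y) = σ (form x y)) {c : W₀} (hc : algebraMap W₀ K₀ c ≠ 0)
    {M : Submodule W₀ N₀} (hM : IsLattice (K₀ := K₀) M)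
    (hstable : mapLat τ (M ⊓ mapLat τ M) = M ⊓ mapLat τ M)
    (hunstable : mapLat τ (M ⊔ mapLat τ M) ≠ M ⊔ mapLat τ M) (hMT : M ⋖ M ⊔ mapLat τ M)
    (hcI : smulLat c (dualLat form (M ⊓ mapLat τ M)) = M ⊓ mapLat τ M) :
    smulLat c (dualLat form M) ⊔ smulLat c (mapLat τ (dualLat form (M ⊔ mapLat τ M)))
      = M ⊓ mapLat τ M := by
  have hτM := isLattice_mapLat hτ hτσ hM
  have hT := isLattice_sup hM hτM
  have hS := isLattice_sup (isLattice_smulLat hc (isLattice_dualLat hsep hM))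
    (isLattice_smulLat hc (isLattice_mapLat hτ hτσ (isLattice_dualLat hsep hT)))
  have hcS : smulLat c (dualLat form (smulLat c (dualLat form M)
      ⊔ smulLat c (mapLat τ (dualLat form (M ⊔ mapLat τ M))))) = M ⊓ mapLat τ M := by
    rw [dualLat_sup, smulLat_inf hc, smulLat_dualLat_smulLat form hc,
      smulLat_dualLat_smulLat form hc, dualLat_dualLat hform hsep hM,
      dualLat_mapLat form hσ hτ hτ_form, dualLat_dualLat hform hsep hT]
    exact (mapLatOrderIso τ hτ).inf_apply_sup_eq hstable hunstable hMT
  have hdual := congrArg (dualLat form)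
    ((smulLatOrderIso K₀ hc).injective (hcS.trans hcI.symm))
  rwa [dualLat_dualLat hform hsep hS,
    dualLat_dualLat hform hsep (isLattice_inf hM hτM)] at hdual

theorem isWebPair_inf_sup [FiniteDimensional K₀ N₀] (p : ℕ) (hform : form.IsAlt)
    (hsep : form.SeparatingLeft)
    (hσ : ∀ c : W₀, algebraMap W₀ K₀ (σ₀ c) = σ (algebraMap W₀ K₀ c))
    (hτ : Function.Bijective τ) (hτσ : ∀ (a : K₀) (x : N₀), τ (a • x) = σ a • τ x)
    (hτ_form : ∀ x y, form (τ x) (τ y) = σ (form x y))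
    {M : Submodule W₀ N₀} (hM : IsLattice (K₀ := K₀) M)
    (hstable : mapLat τ (M ⊓ mapLat τ M) = M ⊓ mapLat τ M)
    (hpI : smulLat (p : W₀) (dualLat form (M ⊓ mapLat τ M)) = M ⊓ mapLat τ M)
    (hpMI : smulLat (p : W₀) (dualLat form M) ⋖ M ⊓ mapLat τ M) (hIM : M ⊓ mapLat τ M ⋖ M)
    (hMT : M ⋖ M ⊔ mapLat τ M) (hTM : M ⊔ mapLat τ M ⋖ dualLat form M) :
    IsWebPair p form τ M (M ⊓ mapLat τ M) (M ⊔ mapLat τ M) := by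
  have hτM := isLattice_mapLat hτ hτσ hM
  have hI := isLattice_inf hM hτM
  have hIdual : mapLat τ (dualLat form (M ⊓ mapLat τ M)) = dualLat form (M ⊓ mapLat τ M) := by
    rw [← dualLat_mapLat form hσ hτ hτ_form, hstable]
  have hTI : M ⊔ mapLat τ M ≤ dualLat form (M ⊓ mapLat τ M) :=
    hTM.le.trans (dualLat_antitone form hIM.le)
  have hIT : M ⊓ mapLat τ M ≤ dualLat form (M ⊔ mapLat τ M) := by
    simpa only [dualLat_dualLat hform hsep hI] using dualLat_antitone form hTI
  refine ⟨hI, isLattice_sup hM hτM, subIdx_one_iff.mpr hpMI, subIdx_one_iff.mpr hIM,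
    subIdx_one_iff.mpr hMT, subIdx_one_iff.mpr hTM, ?_, ?_, ?_, ?_⟩
  · calc smulLat (p : W₀) (mapLat τ (dualLat form (M ⊔ mapLat τ M)))
        ≤ smulLat (p : W₀) (mapLat τ (dualLat form (M ⊓ mapLat τ M))) :=
          smulLat_mono _ (mapLat_mono τ (dualLat_antitone form (hIM.le.trans hMT.le)))
      _ = M ⊓ mapLat τ M := by rw [hIdual, hpI]
  · calc M ⊓ mapLat τ M = mapLat τ (M ⊓ mapLat τ M) := hstable.symm
      _ ≤ mapLat τ (dualLat form (M ⊔ mapLat τ M)) := mapLat_mono τ hIT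
  · rw [hIdual, hpI]
    exact hIM.le.trans hMT.le
  · rwa [hIdual]

end WebPair

theorem statement_10_general
    (p : ℕ)
    {W₀ : Type*} [CommRing W₀] [IsDomain W₀] [IsDiscreteValuationRing W₀]
    {K₀ : Type*} [Field K₀] [Algebra W₀ K₀] [IsFractionRing W₀ K₀]
    (hp_irr : Irreducible (p : W₀))
    (σ : K₀ ≃+* K₀) (σ₀ : W₀ ≃+* W₀)
    (hσ : ∀ c : W₀, algebraMap W₀ K₀ (σ₀ c) = σ (algebraMap W₀ K₀ c))
    {N₀ : Type*} [AddCommGroup N₀] [Module K₀ N₀] [Module W₀ N₀] [IsScalarTower W₀ K₀ N₀]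
    (hdim : Module.finrank K₀ N₀ = 4)
    (form : N₀ →ₗ[K₀] N₀ →ₗ[K₀] K₀)
    (halt : ∀ x, form x x = 0)
    (hnondeg : ∀ x, (∀ y, form x y = 0) → x = 0)
    (τ : N₀ →ₛₗ[(σ₀ : W₀ →+* W₀)] N₀)
    (hτ_bij : Function.Bijective τ)
    (hτ_semilinear : ∀ (a : K₀) (x : N₀), τ (a • x) = σ a • τ x)
    (hτ_form : ∀ x y, form (τ x) (τ y) = σ (form x y))
    (M₀ : Submodule W₀ N₀) (hM₀ : IsAdmissible p form τ M₀)
    (h_inf_stable : mapLat τ (M₀ ⊓ mapLat τ M₀) = M₀ ⊓ mapLat τ M₀)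
    (h_sup_not_stable : mapLat τ (M₀ ⊔ mapLat τ M₀) ≠ M₀ ⊔ mapLat τ M₀)
    (T₀ : Submodule W₀ N₀)
    (hT₁ : SubIdx M₀ T₀ 1) (hT₂ : SubIdx T₀ (dualLat form M₀) 1)
    (hτM_le : mapLat τ M₀ ≤ T₀) :
    T₀ = M₀ ⊔ mapLat τ M₀ ∧
    SubIdx (smulLat (p : W₀) (dualLat form M₀))
      (smulLat (p : W₀) (dualLat form M₀) ⊔ smulLat (p : W₀) (mapLat τ (dualLat form T₀)))
      1 ∧
    SubIdx
      (smulLat (p : W₀) (dualLat form M₀) ⊔ smulLat (p : W₀) (mapLat τ (dualLat form T₀)))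
      M₀ 1 ∧
    IsWebPair p form τ M₀
      (smulLat (p : W₀) (dualLat form M₀) ⊔ smulLat (p : W₀) (mapLat τ (dualLat form T₀)))
      T₀ := by
  obtain ⟨hM, hpM, -, hpτM, -⟩ := hM₀
  have : FiniteDimensional K₀ N₀ := Module.finite_of_finrank_pos (by rw [hdim]; norm_num)
  have hp0 : algebraMap W₀ K₀ p ≠ 0 :=
    (map_ne_zero_iff _ (IsFractionRing.injective W₀ K₀)).mpr hp_irr.ne_zero
  obtain rfl : T₀ = M₀ ⊔ mapLat τ M₀ := (mapLatOrderIso τ hτ_bij).eq_sup_apply_of_covBy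
    h_inf_stable h_sup_not_stable (subIdx_one_iff.mp hT₁) hτM_le
  have hMT := subIdx_one_iff.mp hT₁
  have hTM := subIdx_one_iff.mp hT₂
  have hIM := (mapLatOrderIso τ hτ_bij).inf_apply_covBy h_inf_stable hMT
  have hpMI : smulLat (p : W₀) (dualLat form M₀)
      ⋖ smulLat (p : W₀) (dualLat form (M₀ ⊓ mapLat τ M₀)) :=
    (apply_covBy_apply_iff (smulLatOrderIso K₀ hp0)).mpr <| covBy_dualLat halt hnondeg
      (isLattice_inf hM (isLattice_mapLat hτ_bij hτ_semilinear hM)) hM hIM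
  have hpI := eq_of_covBy_chain_of_finrank_eq_four hdim hp_irr (isLattice_dualLat hnondeg hM)
    hpMI (smulLat_dualLat_inf_mapLat_le halt hnondeg hσ hτ_bij hτ_semilinear hτ_form
      (map_natCast σ₀ p) hM hpM hpτM h_inf_stable) hIM hMT hTM
  rw [hpI] at hpMI
  rw [smulLat_dualLat_sup_eq_inf halt hnondeg hσ hτ_bij hτ_semilinear hτ_form hp0 hM
    h_inf_stable h_sup_not_stable hMT hpI]
  exact ⟨rfl, subIdx_one_iff.mpr hpMI, subIdx_one_iff.mpr hIM, isWebPair_inf_sup p halt hnondeg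
    hσ hτ_bij hτ_semilinear hτ_form hM h_inf_stable hpI hpMI hIM hMT hTM⟩

/-- Let `M₀` be admissible with `M₀ ∩ τ(M₀)` τ-stable but `M₀ + τ(M₀)`
not τ-stable.  Let `T₀` satisfy `M₀ ⊂¹ T₀ ⊂¹ M₀^∨` with `τ(M₀) ⊆ T₀`.  Then
`T₀ = M₀ + τ(M₀)`, and `S₀ := pM₀^∨ + pτ(T₀^∨)` satisfies `pM₀^∨ ⊂¹ S₀ ⊂¹ M₀` and
`(S₀, T₀)` is a web pair for `M₀`. -/
theorem statement_10
    (p : ℕ) (hp : Nat.Prime p) (hp_odd : p ≠ 2)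
    {W₀ : Type*} [CommRing W₀] [IsDomain W₀] [IsDiscreteValuationRing W₀]
    {K₀ : Type*} [Field K₀] [Algebra W₀ K₀] [IsFractionRing W₀ K₀]
    (hp_irr : Irreducible (p : W₀))
    (σ : K₀ ≃+* K₀) (σ₀ : W₀ ≃+* W₀)
    (hσ : ∀ c : W₀, algebraMap W₀ K₀ (σ₀ c) = σ (algebraMap W₀ K₀ c))
    {N₀ : Type*} [AddCommGroup N₀] [Module K₀ N₀] [Module W₀ N₀] [IsScalarTower W₀ K₀ N₀]
    (hdim : Module.finrank K₀ N₀ = 4)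
    (form : N₀ →ₗ[K₀] N₀ →ₗ[K₀] K₀)
    (halt : ∀ x, form x x = 0)
    (hnondeg : ∀ x, (∀ y, form x y = 0) → x = 0)
    (τ : N₀ →ₛₗ[(σ₀ : W₀ →+* W₀)] N₀)
    (hτ_bij : Function.Bijective τ)
    (hτ_semilinear : ∀ (a : K₀) (x : N₀), τ (a • x) = σ a • τ x)
    (hτ_form : ∀ x y, form (τ x) (τ y) = σ (form x y))
    (M₀ : Submodule W₀ N₀) (hM₀ : IsAdmissible p form τ M₀)
    (h_inf_stable : mapLat τ (M₀ ⊓ mapLat τ M₀) = M₀ ⊓ mapLat τ M₀)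
    (h_sup_not_stable : mapLat τ (M₀ ⊔ mapLat τ M₀) ≠ M₀ ⊔ mapLat τ M₀)
    (T₀ : Submodule W₀ N₀)
    (hT₁ : SubIdx M₀ T₀ 1) (hT₂ : SubIdx T₀ (dualLat form M₀) 1)
    (hτM_le : mapLat τ M₀ ≤ T₀) :
    T₀ = M₀ ⊔ mapLat τ M₀ ∧
    SubIdx (smulLat (p : W₀) (dualLat form M₀))
      (smulLat (p : W₀) (dualLat form M₀) ⊔ smulLat (p : W₀) (mapLat τ (dualLat form T₀)))
      1 ∧
    SubIdx
      (smulLat (p : W₀) (dualLat form M₀) ⊔ smulLat (p : W₀) (mapLat τ (dualLat form T₀)))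
      M₀ 1 ∧
    IsWebPair p form τ M₀
      (smulLat (p : W₀) (dualLat form M₀) ⊔ smulLat (p : W₀) (mapLat τ (dualLat form T₀)))
      T₀ :=
  statement_10_general p hp_irr σ σ₀ hσ hdim form halt hnondeg τ hτ_bij hτ_semilinear hτ_form M₀ hM₀
    h_inf_stable h_sup_not_stable T₀ hT₁ hT₂ hτM_le

end QURZ
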